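/- arXiv:1911.01536 — 2 statements merged into one kernel-verified Lean document; each statement's English description precedes it below -/
import Mathlib

section
/- Let 𝔸 = α₀ I + A with A compact self-adjoint on L²[0,1] with nonzero eigenvalues {λ_ℓ} and orthonormal eigenfunctions {f_ℓ}, and let 𝔹 = β₀ I + Σ_{k=1}^d β_k A^k with β₀ ≠ 0. Set η_ℓ = Σ_{k=0}^d β_k λ_ℓ^k. Then the controllability Gramian W_T = ∫₀^T e^{𝔸 t} 𝔹 𝔹* e^{𝔸* t} dt acts on any z ∈ L²[0,1] as W_T z = (∫₀^T e^{2α₀ t} dt) β₀² z + Σ_ℓ (η_ℓ² ∫₀^T e^{2(α₀+λ_ℓ)t} dt − β₀² ∫₀^T e^{2α₀ t} dt) ⟨z, f_ℓ⟩ f_ℓ. -/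
open MeasureTheory intervalIntegral

set_option linter.unusedSectionVars false

section Aux
variable {E : Type*} [NormedAddCommGroup E] [InnerProductSpace ℝ E] [CompleteSpace E]

lemma pow_apply_eigen (T : E →L[ℝ] E) {v : E} {c : ℝ} (h : T v = c • v) (n : ℕ) :
    (T ^ n) v = c ^ n • v := by
  induction n with
  | zero => simp
  | succ n ih =>
    rw [pow_succ, pow_succ, ContinuousLinearMap.mul_apply, h, _root_.map_smul, ih, smul_smul, mul_comm]

lemma exp_apply_eigen (T : E →L[ℝ] E) {v : E} {c : ℝ} (h : T v = c • v) :
    NormedSpace.exp T v = Real.exp c • v := by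
  have hsum := NormedSpace.expSeries_summable' (𝕂 := ℝ) T
  have h1 : NormedSpace.exp T v = ∑' n : ℕ, (((n.factorial : ℝ))⁻¹ • T ^ n) v := by
    rw [NormedSpace.exp_eq_tsum ℝ]
    exact (ContinuousLinearMap.apply ℝ E v).map_tsum hsum
  have h2 : ∀ n : ℕ, (((n.factorial : ℝ))⁻¹ • T ^ n) v = (((n.factorial : ℝ))⁻¹ * c ^ n) • v := by
    intro n
    rw [ContinuousLinearMap.smul_apply, pow_apply_eigen T h, smul_smul]
  have hsc : Summable fun n : ℕ => ((n.factorial : ℝ))⁻¹ * c ^ n := by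
    simpa [smul_eq_mul] using NormedSpace.expSeries_summable' (𝕂 := ℝ) (c : ℝ)
  rw [h1, tsum_congr h2, Summable.tsum_smul_const hsc]
  congr 1
  rw [Real.exp_eq_exp_ℝ, NormedSpace.exp_eq_tsum ℝ]
  exact tsum_congr fun n => by rw [smul_eq_mul]

lemma poly_apply_eigen (T : E →L[ℝ] E) {v : E} {c : ℝ} (h : T v = c • v)
    (d : ℕ) (beta : ℕ → ℝ) :
    (beta 0 • (1 : E →L[ℝ] E) + ∑ k ∈ Finset.Icc 1 d, beta k • T ^ k) v
      = (∑ k ∈ Finset.range (d + 1), beta k * c ^ k) • v := by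
  have hr : Finset.range (d + 1) = insert 0 (Finset.Icc 1 d) := by
    ext x; simp [Finset.mem_range, Finset.mem_Icc]; omega
  rw [hr, Finset.sum_insert (by simp)]
  simp only [ContinuousLinearMap.add_apply, ContinuousLinearMap.smul_apply,
    ContinuousLinearMap.one_apply, ContinuousLinearMap.sum_apply, pow_apply_eigen T h,
    add_smul, Finset.sum_smul, pow_zero, mul_one, smul_smul]

lemma Fop_eigen (A : E →L[ℝ] E) (α₀ : ℝ) (d : ℕ) (beta : ℕ → ℝ) (t : ℝ)
    {v : E} {c : ℝ} (h : A v = c • v) :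
    (NormedSpace.exp (t • (α₀ • (1 : E →L[ℝ] E) + A))
      * ((beta 0 • (1 : E →L[ℝ] E) + ∑ k ∈ Finset.Icc 1 d, beta k • A ^ k)
         * (beta 0 • (1 : E →L[ℝ] E) + ∑ k ∈ Finset.Icc 1 d, beta k • A ^ k))
      * NormedSpace.exp (t • (α₀ • (1 : E →L[ℝ] E) + A))) v
    = ((∑ k ∈ Finset.range (d + 1), beta k * c ^ k) ^ 2 * Real.exp (2 * (α₀ + c) * t)) • v := by
  have hA : (t • (α₀ • (1 : E →L[ℝ] E) + A)) v = (t * (α₀ + c)) • v := by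
    simp only [ContinuousLinearMap.smul_apply, ContinuousLinearMap.add_apply,
      ContinuousLinearMap.one_apply, h]
    module
  have hexp := exp_apply_eigen _ hA
  set B : E →L[ℝ] E := beta 0 • (1 : E →L[ℝ] E) + ∑ k ∈ Finset.Icc 1 d, beta k • A ^ k with hB
  set η : ℝ := ∑ k ∈ Finset.range (d + 1), beta k * c ^ k with hη
  have hBv : ∀ w : E, ∀ a : ℝ, w = a • v → B w = (a * η) • v := by
    intro w a hw
    rw [hw, _root_.map_smul, poly_apply_eigen A h d beta, smul_smul]
  rw [ContinuousLinearMap.mul_apply, ContinuousLinearMap.mul_apply, hexp,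
    ContinuousLinearMap.mul_apply, hBv _ _ rfl, hBv _ _ rfl, _root_.map_smul, hexp, smul_smul]
  congr 1
  rw [show 2 * (α₀ + c) * t = t * (α₀ + c) + t * (α₀ + c) by ring, Real.exp_add]
  ring

end Aux

open MeasureTheory intervalIntegral

set_option linter.unusedSectionVars false

section Aux2
variable {E : Type*} [NormedAddCommGroup E] [InnerProductSpace ℝ E] [CompleteSpace E]

lemma summable_sq_smul {f : ℕ → E} (hortho : Orthonormal ℝ f) {a : ℕ → ℝ}
    (ha : Summable fun ℓ => a ℓ ^ 2) : Summable fun ℓ => a ℓ • f ℓ := by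
  have h := (hortho.orthogonalFamily.summable_iff_norm_sq_summable a).mpr
  simp only [LinearIsometry.toSpanSingleton_apply, Real.norm_eq_abs, sq_abs] at h
  exact h ha

lemma summable_of_sq_le {a b : ℕ → ℝ} (hb : Summable b)
    (h1 : ∀ ℓ, a ℓ ^ 2 ≤ b ℓ) : Summable fun ℓ => a ℓ ^ 2 :=
  Summable.of_nonneg_of_le (fun ℓ => sq_nonneg _) h1 hb

lemma summable_abs_mul {a b : ℕ → ℝ} (ha : Summable fun ℓ => a ℓ ^ 2)
    (hb : Summable fun ℓ => b ℓ ^ 2) : Summable fun ℓ => |a ℓ * b ℓ| := by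
  refine Summable.of_nonneg_of_le (fun ℓ => abs_nonneg _)
    (fun ℓ => ?_) ((ha.add hb).div_const 2)
  rw [abs_mul]
  nlinarith [sq_nonneg (|a ℓ| - |b ℓ|), sq_abs (a ℓ), sq_abs (b ℓ)]

end Aux2

set_option maxHeartbeats 2000000 in
set_option synthInstance.maxHeartbeats 1000000 in
/-- explicit form of the controllability Gramian
`W_T = ∫₀ᵀ e^{𝔸t} 𝔹𝔹* e^{𝔸*t} dt` for `𝔸 = α₀ I + A`, `𝔹 = β₀ I + Σ_{k=1}^d β_k A^k`,
where `A` is compact self-adjoint with nonzero eigenvalues `λ_ℓ` and orthonormal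
eigenfunctions `f_ℓ`, and `η_ℓ = Σ_{k=0}^d β_k λ_ℓ^k`. -/
theorem gramian_explicit_form
    (μ : Measure ℝ) (hμ : μ = (volume : Measure ℝ).restrict (Set.Icc 0 1))
    (A : Lp ℝ 2 μ →L[ℝ] Lp ℝ 2 μ)
    (hcompact : IsCompactOperator A) (hselfadj : IsSelfAdjoint A)
    (f : ℕ → Lp ℝ 2 μ) (hortho : Orthonormal ℝ f)
    (lam : ℕ → ℝ) (hlam : ∀ ℓ, lam ℓ ≠ 0)
    (heig : ∀ ℓ, A (f ℓ) = lam ℓ • f ℓ)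
    (hspec : ∀ z : Lp ℝ 2 μ, A z = ∑' ℓ : ℕ, (lam ℓ * (inner ℝ (f ℓ) z : ℝ)) • f ℓ)
    (α₀ : ℝ) (d : ℕ) (beta : ℕ → ℝ) (T : ℝ) (hT : 0 < T) :
    ∀ z : Lp ℝ 2 μ,
      (∫ t in (0:ℝ)..T,
          NormedSpace.exp (t • (α₀ • (1 : Lp ℝ 2 μ →L[ℝ] Lp ℝ 2 μ) + A))
            * ((beta 0 • (1 : Lp ℝ 2 μ →L[ℝ] Lp ℝ 2 μ)
                  + ∑ k ∈ Finset.Icc 1 d, beta k • A ^ k)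
                * (beta 0 • (1 : Lp ℝ 2 μ →L[ℝ] Lp ℝ 2 μ)
                  + ∑ k ∈ Finset.Icc 1 d, beta k • A ^ k))
            * NormedSpace.exp (t • (α₀ • (1 : Lp ℝ 2 μ →L[ℝ] Lp ℝ 2 μ) + A))) z
      = ((∫ t in (0:ℝ)..T, Real.exp (2 * α₀ * t)) * beta 0 ^ 2) • z
        + ∑' ℓ : ℕ,
            (((∑ k ∈ Finset.range (d + 1), beta k * lam ℓ ^ k) ^ 2
                * ∫ t in (0:ℝ)..T, Real.exp (2 * (α₀ + lam ℓ) * t))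
              - beta 0 ^ 2 * ∫ t in (0:ℝ)..T, Real.exp (2 * α₀ * t))
            • ((inner ℝ z (f ℓ) : ℝ) • f ℓ) := by
  intro z
  set B : Lp ℝ 2 μ →L[ℝ] Lp ℝ 2 μ :=
    beta 0 • (1 : Lp ℝ 2 μ →L[ℝ] Lp ℝ 2 μ) + ∑ k ∈ Finset.Icc 1 d, beta k • A ^ k with hB
  set Fop : ℝ → (Lp ℝ 2 μ →L[ℝ] Lp ℝ 2 μ) := fun t =>
    NormedSpace.exp (t • (α₀ • (1 : Lp ℝ 2 μ →L[ℝ] Lp ℝ 2 μ) + A)) * (B * B)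
      * NormedSpace.exp (t • (α₀ • (1 : Lp ℝ 2 μ →L[ℝ] Lp ℝ 2 μ) + A)) with hFop
  set c : ℕ → ℝ := fun ℓ => (inner ℝ (f ℓ) z : ℝ) with hcdef
  -- basic summability of the coefficients
  have hc2 : Summable fun ℓ => c ℓ ^ 2 := by
    have := hortho.inner_products_summable (x := z)
    simpa [Real.norm_eq_abs, sq_abs] using this
  have hs_sum : Summable fun ℓ => c ℓ • f ℓ := summable_sq_smul hortho hc2
  set s : Lp ℝ 2 μ := ∑' ℓ, c ℓ • f ℓ with hsdef
  have horth := orthonormal_iff_ite.mp hortho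
  have hinner_s : ∀ m, (inner ℝ (f m) s : ℝ) = c m := by
    intro m
    have h1 := (innerSL ℝ (f m)).map_tsum hs_sum
    simp only [innerSL_apply_apply] at h1
    rw [hsdef]
    show (innerSL ℝ (f m)) (∑' ℓ, c ℓ • f ℓ) = c m
    rw [(innerSL ℝ (f m)).map_tsum hs_sum]
    simp only [innerSL_apply_apply, inner_smul_right]
    rw [tsum_eq_single m (fun b hb => by rw [horth]; simp [Ne.symm hb])]
    rw [horth]; simp
  have hAw : A (z - s) = 0 := by
    rw [hspec (z - s)]
    have : ∀ ℓ, (lam ℓ * (inner ℝ (f ℓ) (z - s) : ℝ)) • f ℓ = 0 := by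
      intro ℓ
      rw [inner_sub_right, hinner_s ℓ]
      simp [hcdef]
    rw [tsum_congr this]
    exact tsum_zero
  -- bounds
  set M : ℝ := ‖A‖ with hMdef
  have hM0 : 0 ≤ M := norm_nonneg A
  have hM : ∀ ℓ, |lam ℓ| ≤ M := by
    intro ℓ
    have h1 : ‖A (f ℓ)‖ ≤ M * ‖f ℓ‖ := A.le_opNorm (f ℓ)
    rw [heig ℓ, norm_smul, hortho.1 ℓ] at h1
    simpa using h1
  set η : ℕ → ℝ := fun ℓ => ∑ k ∈ Finset.range (d + 1), beta k * lam ℓ ^ k with hηdef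
  set Cη : ℝ := ∑ k ∈ Finset.range (d + 1), |beta k| * M ^ k with hCηdef
  have hCη : ∀ ℓ, |η ℓ| ≤ Cη := by
    intro ℓ
    refine (Finset.abs_sum_le_sum_abs _ _).trans (Finset.sum_le_sum fun k _ => ?_)
    rw [abs_mul, abs_pow]
    exact mul_le_mul_of_nonneg_left (pow_le_pow_left₀ (abs_nonneg _) (hM ℓ) k) (abs_nonneg _)
  set g : ℕ → ℝ → ℝ := fun ℓ t => η ℓ ^ 2 * Real.exp (2 * (α₀ + lam ℓ) * t) with hgdef
  set aa : ℝ → ℝ := fun t => Real.exp (2 * α₀ * t) * beta 0 ^ 2 with haadef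
  have hexp_arg : ∀ ℓ (t : ℝ), 2 * (α₀ + lam ℓ) * t ≤ 2 * (|α₀| + M) * |t| := by
    intro ℓ t
    calc 2 * (α₀ + lam ℓ) * t ≤ |2 * (α₀ + lam ℓ) * t| := le_abs_self _
      _ = 2 * |α₀ + lam ℓ| * |t| := by rw [abs_mul, abs_mul]; simp
      _ ≤ 2 * (|α₀| + M) * |t| := by
          have h1 : |α₀ + lam ℓ| ≤ |α₀| + M := (abs_add_le _ _).trans (by linarith [hM ℓ])
          have := abs_nonneg t
          nlinarith
  have hg_bound : ∀ ℓ (t : ℝ), |g ℓ t| ≤ Cη ^ 2 * Real.exp (2 * (|α₀| + M) * |t|) := by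
    intro ℓ t
    simp only [hgdef]
    rw [abs_mul, abs_pow, sq_abs, abs_of_pos (Real.exp_pos _)]
    have h1 : η ℓ ^ 2 ≤ Cη ^ 2 := by nlinarith [hCη ℓ, abs_nonneg (η ℓ), sq_abs (η ℓ)]
    exact mul_le_mul h1 (Real.exp_le_exp.2 (hexp_arg ℓ t)) (Real.exp_pos _).le
      (by nlinarith [hCη ℓ, abs_nonneg (η ℓ), sq_abs (η ℓ)])
  have haa_bound : ∀ t : ℝ, |aa t| ≤ Real.exp (2 * |α₀| * |t|) * beta 0 ^ 2 := by
    intro t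
    simp only [haadef]
    rw [abs_mul, abs_pow, sq_abs, abs_of_pos (Real.exp_pos _)]
    refine mul_le_mul_of_nonneg_right (Real.exp_le_exp.2 ?_) (sq_nonneg _)
    calc 2 * α₀ * t ≤ |2 * α₀ * t| := le_abs_self _
      _ = 2 * |α₀| * |t| := by rw [abs_mul, abs_mul]; simp
  -- uniform summability helper
  have key_sum : ∀ (e : ℕ → ℝ) (C : ℝ), (∀ ℓ, |e ℓ| ≤ C) →
      Summable (fun ℓ => (e ℓ * c ℓ) • f ℓ) := by
    intro e C hC
    apply summable_sq_smul hortho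
    apply summable_of_sq_le (hc2.mul_left (C ^ 2))
    intro ℓ
    have h1 : e ℓ ^ 2 ≤ C ^ 2 := by
      rw [← sq_abs]
      exact pow_le_pow_left₀ (abs_nonneg _) (hC ℓ) 2
    calc (e ℓ * c ℓ) ^ 2 = e ℓ ^ 2 * c ℓ ^ 2 := by ring
      _ ≤ C ^ 2 * c ℓ ^ 2 := mul_le_mul_of_nonneg_right h1 (sq_nonneg _)
  -- pointwise action of the operator
  have hpoly0 : ∑ k ∈ Finset.range (d + 1), beta k * (0 : ℝ) ^ k = beta 0 := by
    rw [Finset.sum_eq_single 0]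
    · simp
    · intro b _ hb; simp [zero_pow hb]
    · simp
  have hFf : ∀ (t : ℝ) ℓ, Fop t (f ℓ) = g ℓ t • f ℓ := by
    intro t ℓ
    simp only [hFop, hB, hgdef, hηdef]
    exact Fop_eigen A α₀ d beta t (heig ℓ)
  have hFw : ∀ t : ℝ, Fop t (z - s) = aa t • (z - s) := by
    intro t
    have h00 : A (z - s) = (0 : ℝ) • (z - s) := by rw [hAw, zero_smul]
    simp only [hFop, hB]
    rw [Fop_eigen A α₀ d beta t h00, hpoly0]
    simp only [haadef]
    rw [add_zero, mul_comm]
  have hsum2 : ∀ t : ℝ, Summable fun ℓ => ((g ℓ t - aa t) * c ℓ) • f ℓ := by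
    intro t
    refine key_sum _ (Cη ^ 2 * Real.exp (2 * (|α₀| + M) * |t|)
      + Real.exp (2 * |α₀| * |t|) * beta 0 ^ 2) fun ℓ => ?_
    calc |g ℓ t - aa t| ≤ |g ℓ t| + |aa t| := abs_sub _ _
      _ ≤ _ := add_le_add (hg_bound ℓ t) (haa_bound t)
  have hsum1 : ∀ t : ℝ, Summable fun ℓ => (g ℓ t * c ℓ) • f ℓ := fun t =>
    key_sum _ _ (fun ℓ => hg_bound ℓ t)
  have hsum1' : ∀ t : ℝ, Summable fun ℓ => (aa t * c ℓ) • f ℓ := fun t =>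
    key_sum (fun _ => aa t) |aa t| (fun _ => le_rfl)
  have hFz : ∀ t : ℝ, Fop t z = aa t • z + ∑' ℓ, ((g ℓ t - aa t) * c ℓ) • f ℓ := by
    intro t
    have hdz : Fop t z = Fop t (z - s) + Fop t s := by rw [← map_add, sub_add_cancel]
    have hFs : Fop t s = ∑' ℓ, (g ℓ t * c ℓ) • f ℓ := by
      rw [hsdef, (Fop t).map_tsum hs_sum]
      exact tsum_congr fun ℓ => by rw [_root_.map_smul, hFf t ℓ, smul_smul, mul_comm]
    have has : aa t • s = ∑' ℓ, (aa t * c ℓ) • f ℓ := by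
      rw [hsdef, ← Summable.tsum_const_smul (aa t) hs_sum]
      exact tsum_congr fun ℓ => smul_smul _ _ _
    have hsub : (∑' ℓ, (g ℓ t * c ℓ) • f ℓ) - (∑' ℓ, (aa t * c ℓ) • f ℓ)
        = ∑' ℓ, ((g ℓ t - aa t) * c ℓ) • f ℓ := by
      rw [← Summable.tsum_sub (hsum1 t) (hsum1' t)]
      exact tsum_congr fun ℓ => by rw [← sub_smul, ← sub_mul]
    calc Fop t z = Fop t (z - s) + Fop t s := hdz
      _ = aa t • z - aa t • s + ∑' ℓ, (g ℓ t * c ℓ) • f ℓ := by rw [hFw t, hFs, smul_sub]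
      _ = aa t • z + ((∑' ℓ, (g ℓ t * c ℓ) • f ℓ) - ∑' ℓ, (aa t * c ℓ) • f ℓ) := by
          rw [has]; abel
      _ = aa t • z + ∑' ℓ, ((g ℓ t - aa t) * c ℓ) • f ℓ := by rw [hsub]
  -- continuity
  have hEcont : Continuous fun t : ℝ =>
      NormedSpace.exp (t • (α₀ • (1 : Lp ℝ 2 μ →L[ℝ] Lp ℝ 2 μ) + A)) :=
    (continuous_iff_continuousAt.2 fun x => (NormedSpace.exp_analytic (𝕂 := ℝ) x).continuousAt).comp
      (continuous_id.smul continuous_const)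
  have hFopcont : Continuous Fop := by
    rw [hFop]; exact (hEcont.mul continuous_const).mul hEcont
  have hFopzcont : Continuous fun t => Fop t z :=
    (ContinuousLinearMap.apply ℝ (Lp ℝ 2 μ) z).continuous.comp hFopcont
  have haacont : Continuous aa := by
    simp only [haadef]; fun_prop
  have hgcont : ∀ ℓ, Continuous (g ℓ) := by
    intro ℓ; simp only [hgdef]; fun_prop
  set S : ℝ → Lp ℝ 2 μ := fun t => ∑' ℓ, ((g ℓ t - aa t) * c ℓ) • f ℓ with hSdef
  have hSeq : ∀ t, S t = Fop t z - aa t • z := fun t => by rw [hFz t]; abel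
  have hScont : Continuous S := by
    have : S = fun t => Fop t z - aa t • z := funext hSeq
    rw [this]
    exact hFopzcont.sub (haacont.smul continuous_const)
  have hIa : IntervalIntegrable (fun t => aa t • z) volume 0 T :=
    (haacont.smul continuous_const).intervalIntegrable 0 T
  have hIS : IntervalIntegrable S volume 0 T := hScont.intervalIntegrable 0 T
  -- bound for the integrated coefficients
  set K : ℝ := Cη ^ 2 * Real.exp (2 * (|α₀| + M) * T)
    + Real.exp (2 * |α₀| * T) * beta 0 ^ 2 with hKdef
  have hbd : ∀ ℓ, ∀ t ∈ Set.uIoc (0 : ℝ) T, |g ℓ t - aa t| ≤ K := by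
    intro ℓ t ht
    rw [Set.uIoc_of_le hT.le] at ht
    have htT : |t| ≤ T := by rw [abs_of_pos ht.1]; exact ht.2
    have hcoef1 : 2 * (|α₀| + M) * |t| ≤ 2 * (|α₀| + M) * T := by
      have : (0:ℝ) ≤ 2 * (|α₀| + M) := by positivity
      exact mul_le_mul_of_nonneg_left htT this
    have hcoef2 : 2 * |α₀| * |t| ≤ 2 * |α₀| * T := by
      have : (0:ℝ) ≤ 2 * |α₀| := by positivity
      exact mul_le_mul_of_nonneg_left htT this
    calc |g ℓ t - aa t| ≤ |g ℓ t| + |aa t| := abs_sub _ _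
      _ ≤ Cη ^ 2 * Real.exp (2 * (|α₀| + M) * |t|)
            + Real.exp (2 * |α₀| * |t|) * beta 0 ^ 2 :=
          add_le_add (hg_bound ℓ t) (haa_bound t)
      _ ≤ K := by
          rw [hKdef]
          refine add_le_add ?_ ?_
          · exact mul_le_mul_of_nonneg_left (Real.exp_le_exp.2 hcoef1) (sq_nonneg _)
          · exact mul_le_mul_of_nonneg_right (Real.exp_le_exp.2 hcoef2) (sq_nonneg _)
  set q : ℕ → ℝ := fun ℓ => ∫ t in (0:ℝ)..T, (g ℓ t - aa t) with hqdef
  have hq_bound : ∀ ℓ, |q ℓ| ≤ K * T := by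
    intro ℓ
    have := intervalIntegral.norm_integral_le_of_norm_le_const
      (C := K) (f := fun t => g ℓ t - aa t) (a := 0) (b := T)
      (fun t ht => by simpa [Real.norm_eq_abs] using hbd ℓ t ht)
    simpa [hqdef, Real.norm_eq_abs, abs_of_pos hT] using this
  have hq_sum : Summable fun ℓ => (q ℓ * c ℓ) • f ℓ := key_sum q (K * T) hq_bound
  -- the main exchange of integral and sum
  have hmain : (∫ t in (0:ℝ)..T, S t) = ∑' ℓ, (q ℓ * c ℓ) • f ℓ := by
    apply ext_inner_left ℝ
    intro v
    set w : ℕ → ℝ := fun ℓ => (inner ℝ v (f ℓ) : ℝ) with hwdef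
    have hw2 : Summable fun ℓ => w ℓ ^ 2 := by
      have h := hortho.inner_products_summable (x := v)
      simp only [Real.norm_eq_abs, sq_abs] at h
      exact h.congr fun ℓ => by rw [real_inner_comm]
    have h7 : (inner ℝ v (∫ t in (0:ℝ)..T, S t) : ℝ)
        = ∫ t in (0:ℝ)..T, (inner ℝ v (S t) : ℝ) :=
      ((innerSL ℝ v).intervalIntegral_comp_comm hIS).symm
    have h8 : ∀ t : ℝ, (inner ℝ v (S t) : ℝ) = ∑' ℓ, ((g ℓ t - aa t) * c ℓ) * w ℓ := by
      intro t
      show (innerSL ℝ v) (S t) = _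
      rw [hSdef, (innerSL ℝ v).map_tsum (hsum2 t)]
      exact tsum_congr fun ℓ => by rw [innerSL_apply_apply, inner_smul_right, hwdef, mul_comm _ (w ℓ), mul_comm]
    have h10 : (inner ℝ v (∑' ℓ, (q ℓ * c ℓ) • f ℓ) : ℝ) = ∑' ℓ, (q ℓ * c ℓ) * w ℓ := by
      show (innerSL ℝ v) _ = _
      rw [(innerSL ℝ v).map_tsum hq_sum]
      exact tsum_congr fun ℓ => by rw [innerSL_apply_apply, inner_smul_right, hwdef, mul_comm]
    rw [h7, h10]
    simp only [h8]
    rw [intervalIntegral.integral_of_le hT.le]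
    have hFint : ∀ ℓ, Integrable (fun t => ((g ℓ t - aa t) * c ℓ) * w ℓ)
        (volume.restrict (Set.Ioc (0:ℝ) T)) :=
      fun ℓ => ((((hgcont ℓ).sub haacont).mul continuous_const).mul
        continuous_const).integrableOn_Ioc
    have hbd' : ∀ ℓ, ∀ t ∈ Set.Ioc (0:ℝ) T, ‖((g ℓ t - aa t) * c ℓ) * w ℓ‖ ≤ K * |c ℓ * w ℓ| := by
      intro ℓ t ht
      have h1 : |g ℓ t - aa t| ≤ K := hbd ℓ t (by rwa [Set.uIoc_of_le hT.le])
      rw [Real.norm_eq_abs, abs_mul, abs_mul, abs_mul (c ℓ) (w ℓ), ← mul_assoc]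
      exact mul_le_mul_of_nonneg_right
        (mul_le_mul_of_nonneg_right h1 (abs_nonneg _)) (abs_nonneg _)
    have hFsum : Summable fun ℓ => ∫ t in Set.Ioc (0:ℝ) T, ‖((g ℓ t - aa t) * c ℓ) * w ℓ‖ := by
      refine Summable.of_nonneg_of_le
        (fun ℓ => integral_nonneg fun t => norm_nonneg _) (fun ℓ => ?_)
        (((summable_abs_mul hc2 hw2).mul_left (K * T)))
      have hKnn : 0 ≤ K := le_trans (abs_nonneg _) (hbd 0 T (by
        rw [Set.uIoc_of_le hT.le]; exact ⟨hT, le_rfl⟩))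
      calc (∫ t in Set.Ioc (0:ℝ) T, ‖((g ℓ t - aa t) * c ℓ) * w ℓ‖)
          ≤ ∫ _ in Set.Ioc (0:ℝ) T, K * |c ℓ * w ℓ| := by
            refine setIntegral_mono_on (hFint ℓ).norm ?_ measurableSet_Ioc (hbd' ℓ)
            exact integrableOn_const (by rw [Real.volume_Ioc]; exact ENNReal.ofReal_ne_top)
        _ = K * T * |c ℓ * w ℓ| := by
            rw [setIntegral_const, Real.volume_real_Ioc_of_le hT.le, smul_eq_mul, sub_zero]
            ring
    rw [← MeasureTheory.integral_tsum_of_summable_integral_norm hFint hFsum]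
    refine tsum_congr fun ℓ => ?_
    rw [← intervalIntegral.integral_of_le hT.le]
    simp_rw [mul_assoc]
    try rw [intervalIntegral.integral_mul_const]
    try rfl
    try rw [hqdef]
    try ring
  -- put everything together
  rw [ContinuousLinearMap.intervalIntegral_apply (hFopcont.intervalIntegrable 0 T) z,
    intervalIntegral.integral_congr (g := fun t => aa t • z + S t) (fun t _ => hFz t),
    intervalIntegral.integral_add hIa hIS, intervalIntegral.integral_smul_const, hmain]
  congr 1
  · congr 1
    simp only [haadef]
    rw [intervalIntegral.integral_mul_const]
  · refine tsum_congr fun ℓ => ?_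
    rw [smul_smul]
    congr 1
    have hq : q ℓ = η ℓ ^ 2 * (∫ t in (0:ℝ)..T, Real.exp (2 * (α₀ + lam ℓ) * t))
        - beta 0 ^ 2 * ∫ t in (0:ℝ)..T, Real.exp (2 * α₀ * t) := by
      show (∫ t in (0:ℝ)..T, (g ℓ t - aa t)) = _
      have h1 : IntervalIntegrable (g ℓ) volume 0 T := (hgcont ℓ).intervalIntegrable 0 T
      have h2 : IntervalIntegrable aa volume 0 T := haacont.intervalIntegrable 0 T
      rw [intervalIntegral.integral_sub h1 h2]
      congr 1
      · simp only [hgdef]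
        rw [intervalIntegral.integral_const_mul]
      · simp only [haadef]
        rw [intervalIntegral.integral_mul_const]
        ring
    rw [hq]
    simp only [hηdef]
    rw [show (inner ℝ z (f ℓ) : ℝ) = c ℓ from (real_inner_comm z (f ℓ)).symm]
end

section
/- In the setting of the explicit Gramian: if β₀ ≠ 0, α₀ = 0, η_ℓ ≠ 0 for all ℓ, T > 0, then W_T is invertible with inverse W_T⁻¹ z = (1/(Tβ₀²)) z − (1/(Tβ₀²)) Σ_ℓ ((η_ℓ² ∫₀^T e^{2λ_ℓ t} dt − Tβ₀²)/(η_ℓ² ∫₀^T e^{2λ_ℓ t} dt)) ⟨z, f_ℓ⟩ f_ℓ, i.e., this formula defines a bounded operator M with M W_T = W_T M = I. -/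
open MeasureTheory intervalIntegral

/-!
Both `W_T` and `M` act diagonally: `f ℓ` is an eigenvector of `W_T` for
`η_ℓ² ∫₀ᵀ e^{2λ_ℓ t} dt`, which is nonzero because `η_ℓ ≠ 0` and `T > 0`, and of `M` for
its reciprocal, while on the orthogonal complement of the `f ℓ` they are multiplication by
`Tβ₀²` and its reciprocal. A bounded operator is determined by its values on a family and
on the orthogonal complement of its span, since that complement together with the closed
span fills the space.
-/

section

variable {𝕜 E ι : Type*} [RCLike 𝕜] [NormedAddCommGroup E] [InnerProductSpace 𝕜 E]

theorem Orthonormal.tsum_smul_inner_smul_apply {v : ι → E} (hv : Orthonormal 𝕜 v)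
    (g : ι → 𝕜) (j : ι) :
    ∑' ℓ, g ℓ • (inner 𝕜 (v j) (v ℓ) • v ℓ) = g j • v j := by
  rw [tsum_eq_single j]
  · simp [hv.1 j]
  · intro ℓ hℓ
    simp [hv.2 hℓ.symm]

theorem tsum_smul_inner_smul_eq_zero_of_mem_orthogonal (v : ι → E) (g : ι → 𝕜) {z : E}
    (hz : z ∈ (Submodule.span 𝕜 (Set.range v))ᗮ) :
    ∑' ℓ, g ℓ • (inner 𝕜 z (v ℓ) • v ℓ) = 0 := by
  have hperp : ∀ ℓ, inner 𝕜 z (v ℓ) = 0 := fun ℓ =>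
    Submodule.inner_left_of_mem_orthogonal (Submodule.subset_span (Set.mem_range_self ℓ)) hz
  simp [hperp]

theorem ContinuousLinearMap.ext_on_range_of_orthogonal [CompleteSpace E]
    {F : Type*} [NormedAddCommGroup F] [NormedSpace 𝕜 F] {S T : E →L[𝕜] F} (v : ι → E)
    (hv : ∀ i, S (v i) = T (v i))
    (hperp : ∀ z ∈ (Submodule.span 𝕜 (Set.range v))ᗮ, S z = T z) :
    S = T := by
  set K := Submodule.span 𝕜 (Set.range v)
  set D : E →L[𝕜] F := S - T
  have hK : K ≤ D.ker := by
    rw [Submodule.span_le, Set.range_subset_iff]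
    intro i
    simp [D, hv i]
  have hKperp : Kᗮ ≤ D.ker := fun z hz => by simp [D, hperp z hz]
  have hclosure : Kᗮᗮ ≤ D.ker := by
    rw [Submodule.orthogonal_orthogonal_eq_closure]
    exact K.topologicalClosure_minimal hK D.isClosed_ker
  have htop : Kᗮ ⊔ Kᗮᗮ = ⊤ := Submodule.sup_orthogonal_of_hasOrthogonalProjection
  ext z
  have hz : z ∈ D.ker := htop ▸ sup_le hKperp hclosure <| Submodule.mem_top
  simpa [D, sub_eq_zero] using hz

end

theorem gramian_inverse_explicit_form_general
    (μ : Measure ℝ)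
    (f : ℕ → Lp ℝ 2 μ) (hortho : Orthonormal ℝ f)
    (lam : ℕ → ℝ)
    (beta : ℕ → ℝ) (hbeta0 : beta 0 ≠ 0)
    (eta : ℕ → ℝ)
    (hetane : ∀ ℓ, eta ℓ ≠ 0)
    (T : ℝ) (hT : 0 < T)
    (W M : Lp ℝ 2 μ →L[ℝ] Lp ℝ 2 μ)
    (hW : ∀ z : Lp ℝ 2 μ,
      W z = (T * beta 0 ^ 2) • z
        + ∑' ℓ : ℕ,
            ((eta ℓ ^ 2 * ∫ t in (0:ℝ)..T, Real.exp (2 * lam ℓ * t))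
              - T * beta 0 ^ 2) • ((inner ℝ z (f ℓ) : ℝ) • f ℓ))
    (hM : ∀ z : Lp ℝ 2 μ,
      M z = (1 / (T * beta 0 ^ 2)) • z
        - (1 / (T * beta 0 ^ 2)) • ∑' ℓ : ℕ,
            (((eta ℓ ^ 2 * ∫ t in (0:ℝ)..T, Real.exp (2 * lam ℓ * t))
                - T * beta 0 ^ 2)
              / (eta ℓ ^ 2 * ∫ t in (0:ℝ)..T, Real.exp (2 * lam ℓ * t)))
            • ((inner ℝ z (f ℓ) : ℝ) • f ℓ)) :
    M * W = 1 ∧ W * M = 1 := by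
  set a : ℕ → ℝ := fun ℓ => eta ℓ ^ 2 * ∫ t in (0:ℝ)..T, Real.exp (2 * lam ℓ * t)
  set b : ℝ := T * beta 0 ^ 2
  have hb : b ≠ 0 := mul_ne_zero hT.ne' (pow_ne_zero 2 hbeta0)
  have ha : ∀ ℓ, a ℓ ≠ 0 := fun ℓ =>
    mul_ne_zero (pow_ne_zero 2 (hetane ℓ)) <| ne_of_gt <| intervalIntegral_pos_of_pos_on
      (Continuous.intervalIntegrable (by fun_prop) _ _) (fun t _ => Real.exp_pos _) hT
  have hWf : ∀ j, W (f j) = a j • f j := fun j => by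
    rw [hW, hortho.tsum_smul_inner_smul_apply, ← add_smul, add_sub_cancel]
  have hMf : ∀ j, M (f j) = (a j)⁻¹ • f j := fun j => by
    rw [hM, hortho.tsum_smul_inner_smul_apply, smul_smul, ← sub_smul]
    change (1 / b - 1 / b * ((a j - b) / a j)) • f j = _
    congr 1
    field_simp [ha j]
    ring
  have hWperp : ∀ z ∈ (Submodule.span ℝ (Set.range f))ᗮ, W z = b • z := fun z hz => by
    rw [hW, tsum_smul_inner_smul_eq_zero_of_mem_orthogonal f _ hz, add_zero]
  have hMperp : ∀ z ∈ (Submodule.span ℝ (Set.range f))ᗮ, M z = b⁻¹ • z := fun z hz => by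
    rw [hM, tsum_smul_inner_smul_eq_zero_of_mem_orthogonal f _ hz, smul_zero, sub_zero,
      one_div]
  constructor <;>
    refine ContinuousLinearMap.ext_on_range_of_orthogonal f (fun j => ?_) (fun z hz => ?_)
  · simp [hWf, hMf, smul_smul, ha j]
  · simp [hWperp z hz, hMperp _ (Submodule.smul_mem _ _ hz), smul_smul, hb]
  · simp [hWf, hMf, smul_smul, ha j]
  · simp [hMperp z hz, hWperp _ (Submodule.smul_mem _ _ hz), smul_smul, hb]

/-- inverse of the controllability Gramian in the case `α₀ = 0`.
Given `W_T z = Tβ₀² z + Σ_ℓ (η_ℓ² ∫₀ᵀ e^{2λ_ℓ t} dt − Tβ₀²) ⟨z,f_ℓ⟩ f_ℓ` (with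
`η_ℓ = Σ_{k=0}^d β_k λ_ℓ^k` nonzero, `β₀ ≠ 0`, eigenvalues bounded and the Gramian
eigenvalues bounded below by a positive constant), the bounded operator `M` defined by
`M z = (1/(Tβ₀²)) z − (1/(Tβ₀²)) Σ_ℓ ((η_ℓ² ∫₀ᵀ e^{2λ_ℓ t} dt − Tβ₀²)/(η_ℓ² ∫₀ᵀ e^{2λ_ℓ t} dt)) ⟨z,f_ℓ⟩ f_ℓ`
is a two-sided inverse of `W_T`. -/
theorem gramian_inverse_explicit_form
    (μ : Measure ℝ) (hμ : μ = (volume : Measure ℝ).restrict (Set.Icc 0 1))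
    (A : Lp ℝ 2 μ →L[ℝ] Lp ℝ 2 μ)
    (hcompact : IsCompactOperator A) (hselfadj : IsSelfAdjoint A)
    (f : ℕ → Lp ℝ 2 μ) (hortho : Orthonormal ℝ f)
    (lam : ℕ → ℝ) (hlam : ∀ ℓ, lam ℓ ≠ 0)
    (heig : ∀ ℓ, A (f ℓ) = lam ℓ • f ℓ)
    (d : ℕ) (beta : ℕ → ℝ) (hbeta0 : beta 0 ≠ 0)
    (eta : ℕ → ℝ) (heta : ∀ ℓ, eta ℓ = ∑ k ∈ Finset.range (d + 1), beta k * lam ℓ ^ k)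
    (hetane : ∀ ℓ, eta ℓ ≠ 0)
    (T : ℝ) (hT : 0 < T)
    (Lam : ℝ) (hlamBdd : ∀ ℓ, |lam ℓ| ≤ Lam)
    (c : ℝ) (hc : 0 < c)
    (hlow : ∀ ℓ, c ≤ eta ℓ ^ 2 * ∫ t in (0:ℝ)..T, Real.exp (2 * lam ℓ * t))
    (W M : Lp ℝ 2 μ →L[ℝ] Lp ℝ 2 μ)
    (hW : ∀ z : Lp ℝ 2 μ,
      W z = (T * beta 0 ^ 2) • z
        + ∑' ℓ : ℕ,
            ((eta ℓ ^ 2 * ∫ t in (0:ℝ)..T, Real.exp (2 * lam ℓ * t))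
              - T * beta 0 ^ 2) • ((inner ℝ z (f ℓ) : ℝ) • f ℓ))
    (hM : ∀ z : Lp ℝ 2 μ,
      M z = (1 / (T * beta 0 ^ 2)) • z
        - (1 / (T * beta 0 ^ 2)) • ∑' ℓ : ℕ,
            (((eta ℓ ^ 2 * ∫ t in (0:ℝ)..T, Real.exp (2 * lam ℓ * t))
                - T * beta 0 ^ 2)
              / (eta ℓ ^ 2 * ∫ t in (0:ℝ)..T, Real.exp (2 * lam ℓ * t)))
            • ((inner ℝ z (f ℓ) : ℝ) • f ℓ)) :
    M * W = 1 ∧ W * M = 1 :=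
  gramian_inverse_explicit_form_general μ f hortho lam beta hbeta0 eta hetane T hT W M hW hM
end
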